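/- Define on U(2) the partial map ℛ sending U = [[z, −λw̄],[w, λz̄]] (with |λ|=1, |z|²+|w|²=1) to the symplectic reduction with respect to W = ℂ ⊕ 0. Then U is clean with W (i.e. Ker(1+U) ∩ W = {0}) if and only if z ≠ −1, and in that case ℛ(U) = λ(1+z̄)/(1+z), which is a unit complex number. In particular, restricted to SU(2) (λ = 1), ℛ maps SU(2)∖{−1} onto S¹∖{−1} via [[z,−w̄],[w,z̄]] ↦ (1+z̄)/(1+z). -/

import Mathlib

/-!
Relative to `W = ℂ ⊕ 0` the blocks of `U = [[z, -λw̄], [w, λz̄]]` are the entries `X = z`,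
`Y = -λw̄`, `Z = w`, `T = λz̄`. Since `(1 + U)(c, 0) = ((1 + z)c, wc)`, cleanness fails exactly
when `z = -1`, which forces `w = 0`. The reduction formula is the identity
`z̄(1 + z) + |w|² = 1 + z̄`, and its value has modulus one because `1 + z̄` is the conjugate of
`1 + z`. A unit `μ ≠ -1` is the image of `z = μ̄`, `w = 0`.
-/

noncomputable section

open Matrix

namespace Matrix

variable {R : Type*} [CommRing R] [StarRing R]

def unitaryParam (lam z w : R) : Matrix (Fin 2) (Fin 2) R :=
  !![z, -lam * starRingEnd R w; w, lam * starRingEnd R z]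

theorem unitaryParam_mem_unitaryGroup {lam z w : R} (hlam : lam * star lam = 1)
    (hzw : z * star z + w * star w = 1) :
    unitaryParam lam z w ∈ unitaryGroup (Fin 2) R := by
  rw [mem_unitaryGroup_iff, star_eq_conjTranspose, unitaryParam, eta_fin_two (_ᴴ),
    mul_fin_two, one_fin_two]
  simp only [conjTranspose_apply, of_apply, cons_val', cons_val_zero, cons_val_one, empty_val',
    cons_val_fin_one, starRingEnd_apply, star_mul', star_neg, star_star,
    EmbeddingLike.apply_eq_iff_eq, vecCons_inj, and_true]
  refine ⟨⟨?_, ?_⟩, ?_, ?_⟩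
  · linear_combination hzw + w * star w * hlam
  · linear_combination -(z * star w) * hlam
  · linear_combination -(w * star z) * hlam
  · linear_combination hzw + z * star z * hlam

theorem one_add_unitaryParam_mulVec (lam z w c : R) :
    (1 + unitaryParam lam z w) *ᵥ ![c, 0] = ![(1 + z) * c, w * c] := by
  ext i
  fin_cases i <;> simp [unitaryParam, mulVec, dotProduct, Fin.sum_univ_two, one_apply]

end Matrix

section StarField

variable {K : Type*} [Field K] [StarRing K]

/-- The left-hand side is `T - Z (1 + X)⁻¹ Y` for the blocks of `unitaryParam lam z w` along the
first coordinate axis. -/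
theorem unitaryParam_reduction_eq {lam z w : K} (hzw : z * star z + w * star w = 1)
    (hz : z ≠ -1) :
    lam * star z - w * (1 + z)⁻¹ * (-lam * star w) = lam * (1 + star z) / (1 + z) := by
  have : 1 + z ≠ 0 := by rwa [Ne, add_eq_zero_iff_eq_neg']
  field_simp
  linear_combination lam * hzw

theorem one_add_div_one_add_star_eq_self {mu : K} (hmu : mu * star mu = 1)
    (hne : star mu ≠ -1) : (1 + mu) / (1 + star mu) = mu := by
  rw [div_eq_iff (by rwa [Ne, add_eq_zero_iff_eq_neg'])]
  linear_combination -hmu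

end StarField

namespace Complex

open ComplexConjugate

theorem mul_conj_eq_one_of_norm_eq_one {a : ℂ} (h : ‖a‖ = 1) : a * conj a = 1 := by
  rw [mul_conj', h]
  norm_num

theorem mul_conj_add_mul_conj_eq_one {z w : ℂ} (h : ‖z‖ ^ 2 + ‖w‖ ^ 2 = 1) :
    z * conj z + w * conj w = 1 := by
  rw [mul_conj', mul_conj']
  exact_mod_cast h

theorem norm_mul_one_add_conj_div_one_add {lam z : ℂ} (hlam : ‖lam‖ = 1) (hz : z ≠ -1) :
    ‖lam * (1 + conj z) / (1 + z)‖ = 1 := by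
  have : 1 + z ≠ 0 := by rwa [Ne, add_eq_zero_iff_eq_neg']
  rw [norm_div, norm_mul, hlam, one_mul, show 1 + conj z = conj (1 + z) by simp, norm_conj,
    div_self (norm_ne_zero_iff.mpr this)]

theorem unitaryParam_clean_iff {lam z w : ℂ} (h : ‖z‖ ^ 2 + ‖w‖ ^ 2 = 1) :
    (∀ c : ℂ, (1 + unitaryParam lam z w) *ᵥ ![c, 0] = 0 → c = 0) ↔ z ≠ -1 := by
  simp only [one_add_unitaryParam_mulVec, cons_eq_zero_iff, zero_empty, and_true]
  constructor
  · rintro hclean rfl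
    have hw : w = 0 := by simpa using h
    simpa [hw] using hclean 1
  · rintro hz c ⟨hc, -⟩
    exact (mul_eq_zero.mp hc).resolve_left fun h1 => hz (add_eq_zero_iff_eq_neg'.mp h1)

end Complex

open Complex ComplexConjugate

theorem reduction_on_U2 :
    (∀ lam z w : ℂ, ‖lam‖ = 1 → ‖z‖ ^ 2 + ‖w‖ ^ 2 = 1 →
      (!![z, -lam * (starRingEnd ℂ) w; w, lam * (starRingEnd ℂ) z] ∈
          Matrix.unitaryGroup (Fin 2) ℂ) ∧
      ((∀ c : ℂ, ((1 : Matrix (Fin 2) (Fin 2) ℂ) +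
            !![z, -lam * (starRingEnd ℂ) w; w, lam * (starRingEnd ℂ) z]).mulVec ![c, 0] = 0 →
          c = 0) ↔ z ≠ -1) ∧
      (z ≠ -1 →
        lam * (starRingEnd ℂ) z - w * (1 + z)⁻¹ * (-lam * (starRingEnd ℂ) w) =
            lam * (1 + (starRingEnd ℂ) z) / (1 + z) ∧
        ‖lam * (1 + (starRingEnd ℂ) z) / (1 + z)‖ = 1)) ∧
    (∀ mu : ℂ, ‖mu‖ = 1 → mu ≠ -1 →
      ∃ z w : ℂ, ‖z‖ ^ 2 + ‖w‖ ^ 2 = 1 ∧ z ≠ -1 ∧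
        (1 + (starRingEnd ℂ) z) / (1 + z) = mu) := by
  refine ⟨fun lam z w hlam hzw => ?_, fun mu hmu hne => ?_⟩
  · have hzw' := mul_conj_add_mul_conj_eq_one hzw
    exact ⟨unitaryParam_mem_unitaryGroup (mul_conj_eq_one_of_norm_eq_one hlam) hzw',
      unitaryParam_clean_iff hzw,
      fun hz => ⟨unitaryParam_reduction_eq hzw' hz, norm_mul_one_add_conj_div_one_add hlam hz⟩⟩
  · have hconj : conj mu ≠ -1 := fun h => hne (by simpa using congrArg conj h)
    refine ⟨conj mu, 0, by simp [hmu], hconj, ?_⟩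
    rw [conj_conj]
    exact one_add_div_one_add_star_eq_self (mul_conj_eq_one_of_norm_eq_one hmu) hconj
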